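/- Let n > 3 be odd with prime factorization n = p_1^{α_1} p_2^{α_2} ⋯ p_k^{α_k}. The number of admissible m for which L_n(m) is strictly non-right alternative — i.e. (x·y)·y ≠ x·(y·y) for every pair of distinct non-identity elements x, y — equals P_n = ∏_{i=1}^{k} (p_i − 3) p_i^{α_i − 1}; the same count P_n holds for the strictly non-left alternative loops in L_n (those with (x·x)·y ≠ x·(x·y) for every pair of distinct non-identity elements x, y). -/

import Mathlib

/-! In `L_n(m)`, for distinct `x y : Z_n` a direct computation gives
`(x·y)·y - x = m(m - 2)(x - y)` and `x·(x·y) - y = (m - 1)(m + 1)(y - x)`. Hence `L_n(m)` is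
strictly non-right (non-left) alternative iff `m(m - 2)` (resp. `(m - 1)(m + 1)`) is a unit
mod `n`, and with admissibility both counts become the number of residues `x` mod `n` such
that `x - a` is a unit for the three values `a ∈ {0, 1, 2}` (resp. `{-1, 0, 1}`). By the
Chinese remainder theorem this count is multiplicative in `n`; modulo `p ^ α` the residue `x`
only has to avoid three distinct classes mod the odd prime `p`, leaving `(p - 3) p ^ (α - 1)`
choices. -/

/-- `m` is admissible for `n`: `0 < m < n`, `gcd(m, n) = 1` and `gcd(m - 1, n) = 1`. -/
def LAdmissible (n m : ℕ) : Prop :=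
  0 < m ∧ m < n ∧ Nat.gcd m n = 1 ∧ Nat.gcd (m - 1) n = 1

/-- The product of the loop `L_n(m)`: the carrier is `Option (ZMod n)`, with `none`
playing the role of the identity `e` and `some i` the element `i ∈ Z_n`.
`e·x = x·e = x`, `i·i = e`, and for `i ≠ j`, `i·j = m·j - (m-1)·i (mod n)`. -/
def lmul (n m : ℕ) : Option (ZMod n) → Option (ZMod n) → Option (ZMod n)
  | none, x => x
  | some i, none => some i
  | some i, some j =>
      if i = j then none
      else some ((m : ZMod n) * j - ((m : ZMod n) - 1) * i)

open Finset

theorem AddMonoidHom.card_filter_mem_eq {G H : Type*} [AddGroup G] [Fintype G] [AddGroup H]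
    [DecidableEq H] {f : G →+ H} (hf : Function.Surjective f) (S : Finset H) :
    #{g | f g ∈ S} = #S * #{g | f g = 0} := by
  rw [card_eq_sum_card_fiberwise (s := {g | f g ∈ S}) fun g hg => (mem_filter.mp hg).2,
    ← smul_eq_mul, ← sum_const]
  refine sum_congr rfl fun h hh => ?_
  rw [filter_filter, ← AddMonoidHom.card_fiber_eq_of_mem_range f (hf h) (hf 0)]
  exact congrArg card <| filter_congr fun g _ => ⟨fun hg => hg.2, fun hg => ⟨hg ▸ hh, hg⟩⟩

namespace ZMod

theorem card_filter_castHom_mem {p k : ℕ} [NeZero p] (hk : k ≠ 0) (S : Finset (ZMod p)) :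
    #{x : ZMod (p ^ k) | castHom (dvd_pow_self p hk) (ZMod p) x ∈ S} = #S * p ^ (k - 1) := by
  set f := (castHom (dvd_pow_self p hk) (ZMod p)).toAddMonoidHom
  have hf : Function.Surjective f := castHom_surjective (dvd_pow_self p hk)
  have hker : p * p ^ (k - 1) = p * #{x | f x = 0} := by
    rw [← pow_succ', Nat.sub_add_cancel (Nat.pos_of_ne_zero hk)]
    simpa using f.card_filter_mem_eq hf univ
  rw [Nat.eq_of_mul_eq_mul_left (NeZero.pos p) hker]
  exact f.card_filter_mem_eq hf S

theorem isUnit_iff_castHom_ne_zero {p k : ℕ} (hp : p.Prime) (hk : k ≠ 0) (x : ZMod (p ^ k)) :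
    IsUnit x ↔ castHom (dvd_pow_self p hk) (ZMod p) x ≠ 0 := by
  have : NeZero p := ⟨hp.ne_zero⟩
  rw [← natCast_zmod_val x, isUnit_iff_coprime, map_natCast, Ne, natCast_eq_zero_iff,
    Nat.coprime_pow_right_iff (Nat.pos_of_ne_zero hk), Nat.coprime_comm,
    hp.coprime_iff_not_dvd]

theorem injOn_intCast_of_sub_lt {p : ℕ} {A : Finset ℤ}
    (hA : ∀ a ∈ A, ∀ b ∈ A, a - b < p) :
    Set.InjOn (Int.cast : ℤ → ZMod p) A := by
  intro a ha b hb hab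
  rw [intCast_eq_intCast_iff_dvd_sub] at hab
  have hab_lt := hA a ha b hb
  have hba_lt := hA b hb a ha
  linarith [Int.eq_zero_of_abs_lt_dvd hab (abs_lt.mpr ⟨by linarith, by linarith⟩)]

end ZMod

noncomputable def countAvoiding (A : Finset ℤ) (n : ℕ) : ℕ :=
  Nat.card {x : ZMod n // ∀ a ∈ A, IsUnit (x - a)}

theorem countAvoiding_one (A : Finset ℤ) : countAvoiding A 1 = 1 :=
  Nat.card_eq_one_iff_unique.mpr
    ⟨inferInstance, ⟨⟨0, fun _ _ => isUnit_of_subsingleton _⟩⟩⟩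

theorem countAvoiding_mul (A : Finset ℤ) {a b : ℕ} (h : a.Coprime b) :
    countAvoiding A (a * b) = countAvoiding A a * countAvoiding A b := by
  let e := ZMod.chineseRemainder h
  rw [countAvoiding, countAvoiding, countAvoiding, ← Nat.card_prod]
  refine Nat.card_congr <| (Equiv.subtypeEquiv e.toEquiv fun x => ?_).trans
    (Equiv.subtypeProdEquivProd (p := fun u : ZMod a => ∀ c ∈ A, IsUnit (u - c))
      (q := fun v : ZMod b => ∀ c ∈ A, IsUnit (v - c)))
  rw [← forall₂_and]
  refine forall₂_congr fun c _ => ?_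
  rw [← isUnit_map_iff e, map_sub, map_intCast, Prod.isUnit_iff]
  rfl

theorem countAvoiding_prime_pow {p k : ℕ} (hp : p.Prime) (hk : k ≠ 0) {A : Finset ℤ}
    (hA : Set.InjOn (Int.cast : ℤ → ZMod p) A) :
    countAvoiding A (p ^ k) = (p - #A) * p ^ (k - 1) := by
  have : NeZero p := ⟨hp.ne_zero⟩
  classical
  have hmem : ∀ x : ZMod (p ^ k), (∀ a ∈ A, IsUnit (x - a)) ↔
      ZMod.castHom (dvd_pow_self p hk) (ZMod p) x ∈ (A.image (Int.cast : ℤ → ZMod p))ᶜ := by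
    intro x
    simp only [ZMod.isUnit_iff_castHom_ne_zero hp hk, map_sub, map_intCast, sub_ne_zero,
      mem_compl, mem_image, not_exists, not_and]
    exact forall₂_congr fun a _ => ne_comm
  rw [countAvoiding, Nat.card_eq_fintype_card, Fintype.card_subtype,
    filter_congr fun x _ => hmem x, ZMod.card_filter_castHom_mem hk, card_compl, ZMod.card,
    card_image_of_injOn hA]

theorem countAvoiding_eq_prod {n : ℕ} (hn : n ≠ 0) {A : Finset ℤ}
    (hA : ∀ p ∈ n.primeFactors, Set.InjOn (Int.cast : ℤ → ZMod p) A) :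
    countAvoiding A n = ∏ p ∈ n.primeFactors, (p - #A) * p ^ (n.factorization p - 1) := by
  rw [Nat.multiplicative_factorization _ (fun _ _ => countAvoiding_mul A) (countAvoiding_one A) hn]
  exact prod_congr rfl fun p hp => countAvoiding_prime_pow (Nat.prime_of_mem_primeFactors hp)
    (Finsupp.mem_support_iff.mp hp) (hA p hp)

theorem injOn_intCast_of_odd_of_sub_le_two {n : ℕ} (hn : Odd n) {A : Finset ℤ}
    (hA : ∀ a ∈ A, ∀ b ∈ A, a - b ≤ 2) :
    ∀ p ∈ n.primeFactors, Set.InjOn (Int.cast : ℤ → ZMod p) A := by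
  intro p hp
  have hp2 : p ≠ 2 := fun h => hn.not_two_dvd_nat (h ▸ Nat.dvd_of_mem_primeFactors hp)
  have := (Nat.prime_of_mem_primeFactors hp).two_le
  exact ZMod.injOn_intCast_of_sub_lt fun a ha b hb => by have := hA a ha b hb; omega

section Loop

variable {n m : ℕ}

def IsStrictlyNonRightAlternative (n m : ℕ) : Prop :=
  ∀ x y : ZMod n, x ≠ y →
    lmul n m (lmul n m (some x) (some y)) (some y)
      ≠ lmul n m (some x) (lmul n m (some y) (some y))

def IsStrictlyNonLeftAlternative (n m : ℕ) : Prop :=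
  ∀ x y : ZMod n, x ≠ y →
    lmul n m (lmul n m (some x) (some x)) (some y)
      ≠ lmul n m (some x) (lmul n m (some x) (some y))

@[simp] theorem lmul_none_left (x : Option (ZMod n)) : lmul n m none x = x := rfl

@[simp] theorem lmul_none_right (i : ZMod n) : lmul n m (some i) none = some i := rfl

@[simp] theorem lmul_self (i : ZMod n) : lmul n m (some i) (some i) = none := by
  simp [lmul]

theorem lmul_of_ne {i j : ZMod n} (h : i ≠ j) :
    lmul n m (some i) (some j) = some ((m : ZMod n) * j - ((m : ZMod n) - 1) * i) := by
  simp [lmul, h]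

theorem forall_ne_imp_not_iff_isUnit [NeZero n] {c : ZMod n} {P : ZMod n → ZMod n → Prop}
    (hP : ∀ x y, x ≠ y → (P x y ↔ (x - y) * c = 0)) :
    (∀ x y, x ≠ y → ¬ P x y) ↔ IsUnit c := by
  rw [isUnit_iff_mem_nonZeroDivisors_of_finite, mem_nonZeroDivisors_iff_right]
  refine ⟨fun h d hd => ?_,
    fun h x y hxy hPxy => hxy (sub_eq_zero.mp (h _ ((hP x y hxy).mp hPxy)))⟩
  by_contra hd0
  exact h d 0 hd0 ((hP d 0 hd0).mpr (by rwa [sub_zero]))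

theorem isStrictlyNonRightAlternative_iff [NeZero n] (hm : IsUnit ((m : ZMod n) - 1)) :
    IsStrictlyNonRightAlternative n m ↔ IsUnit ((m : ZMod n) * ((m : ZMod n) - 2)) := by
  refine forall_ne_imp_not_iff_isUnit fun x y hxy => ?_
  have hne : (m : ZMod n) * y - ((m : ZMod n) - 1) * x ≠ y := fun h =>
    hxy (sub_eq_zero.mp (hm.mul_right_eq_zero.mp (by linear_combination h))).symm
  rw [lmul_self, lmul_none_right, lmul_of_ne hxy, lmul_of_ne hne, Option.some_inj]
  constructor <;> intro h <;> linear_combination h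

theorem isStrictlyNonLeftAlternative_iff [NeZero n] (hm : IsUnit (m : ZMod n)) :
    IsStrictlyNonLeftAlternative n m ↔ IsUnit (((m : ZMod n) - 1) * ((m : ZMod n) + 1)) := by
  refine forall_ne_imp_not_iff_isUnit fun x y hxy => ?_
  have hne : x ≠ (m : ZMod n) * y - ((m : ZMod n) - 1) * x := fun h =>
    hxy (sub_eq_zero.mp (hm.mul_right_eq_zero.mp (by linear_combination -h))).symm
  rw [lmul_self, lmul_none_left, lmul_of_ne hxy, lmul_of_ne hne, Option.some_inj]
  constructor <;> intro h <;> linear_combination h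

theorem lAdmissible_iff (hn : 1 < n) :
    LAdmissible n m ↔ m < n ∧ IsUnit (m : ZMod n) ∧ IsUnit ((m : ZMod n) - 1) := by
  have : Fact (1 < n) := ⟨hn⟩
  rcases Nat.eq_zero_or_pos m with rfl | hm
  · simp [LAdmissible]
  · rw [LAdmissible, ZMod.isUnit_iff_coprime, ← Nat.cast_pred hm, ZMod.isUnit_iff_coprime]
    simp [hm, Nat.Coprime]

theorem ncard_setOf_lt_and [NeZero n] (P : ZMod n → Prop) :
    {m : ℕ | m < n ∧ P m}.ncard = Nat.card {x : ZMod n // P x} := by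
  rw [← Nat.card_coe_set_eq]
  refine Nat.card_congr ⟨fun m => ⟨m, m.2.2⟩,
    fun x => ⟨x.1.val, x.1.val_lt, by simpa using x.2⟩,
    fun m => Subtype.ext (ZMod.val_cast_of_lt m.2.1), fun x => by simp⟩

theorem ncard_lAdmissible_and_isStrictlyNonRightAlternative (hn : 1 < n) :
    {m | LAdmissible n m ∧ IsStrictlyNonRightAlternative n m}.ncard
      = countAvoiding {0, 1, 2} n := by
  have : NeZero n := ⟨by omega⟩
  rw [countAvoiding, ← ncard_setOf_lt_and]
  congr 1
  ext m
  simp only [Set.mem_ofPred_eq, lAdmissible_iff hn, mem_insert, mem_singleton, forall_eq_or_imp,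
    forall_eq, Int.cast_zero, Int.cast_one, Int.cast_ofNat, sub_zero, and_assoc]
  refine and_congr_right fun _ => and_congr_right fun hm => and_congr_right fun hm1 => ?_
  rw [isStrictlyNonRightAlternative_iff hm1, IsUnit.mul_iff, and_iff_right hm]

theorem ncard_lAdmissible_and_isStrictlyNonLeftAlternative (hn : 1 < n) :
    {m | LAdmissible n m ∧ IsStrictlyNonLeftAlternative n m}.ncard
      = countAvoiding {-1, 0, 1} n := by
  have : NeZero n := ⟨by omega⟩
  rw [countAvoiding, ← ncard_setOf_lt_and]
  congr 1
  ext m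
  simp only [Set.mem_ofPred_eq, lAdmissible_iff hn, mem_insert, mem_singleton, forall_eq_or_imp,
    forall_eq, Int.cast_zero, Int.cast_one, Int.cast_neg, sub_neg_eq_add, sub_zero, and_assoc]
  refine and_congr_right fun _ => ⟨fun ⟨hm, hm1, hnl⟩ => ?_, fun ⟨hm2, hm, hm1⟩ => ?_⟩
  · exact ⟨(IsUnit.mul_iff.mp ((isStrictlyNonLeftAlternative_iff hm).mp hnl)).2, hm, hm1⟩
  · exact ⟨hm, hm1, (isStrictlyNonLeftAlternative_iff hm).mpr (hm1.mul hm2)⟩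

end Loop

/-- The number of admissible `m` for which `L_n(m)` is strictly non-right
alternative equals `P_n = ∏ (p_i - 3) * p_i ^ (α_i - 1)`, and the same count
holds for the strictly non-left alternative loops in `L_n`. -/
theorem stmt4 (n : ℕ) (hn : 3 < n) (hodd : Odd n) :
    {m : ℕ | LAdmissible n m ∧
        ∀ x y : ZMod n, x ≠ y →
          lmul n m (lmul n m (some x) (some y)) (some y)
            ≠ lmul n m (some x) (lmul n m (some y) (some y))}.ncard
      = ∏ p ∈ n.primeFactors, (p - 3) * p ^ (n.factorization p - 1)
    ∧ {m : ℕ | LAdmissible n m ∧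
        ∀ x y : ZMod n, x ≠ y →
          lmul n m (lmul n m (some x) (some x)) (some y)
            ≠ lmul n m (some x) (lmul n m (some x) (some y))}.ncard
      = ∏ p ∈ n.primeFactors, (p - 3) * p ^ (n.factorization p - 1) := by
  have hn1 : 1 < n := by omega
  exact ⟨(ncard_lAdmissible_and_isStrictlyNonRightAlternative hn1).trans
      (countAvoiding_eq_prod (by omega) (injOn_intCast_of_odd_of_sub_le_two hodd (by decide))),
    (ncard_lAdmissible_and_isStrictlyNonLeftAlternative hn1).trans
      (countAvoiding_eq_prod (by omega) (injOn_intCast_of_odd_of_sub_le_two hodd (by decide)))⟩
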